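/- Let ρ be a density operator and let G be a set of full-rank density operators of the form exp(H)/Tr(exp(H)) with H ranging over a linear subspace V of Hermitian operators. Suppose σ ∈ G satisfies Tr(ρ H) = Tr(σ H) for all H ∈ V. Then σ minimizes the relative entropy S(ρ‖·) over G, and the minimum value equals S(σ) − S(ρ). -/

import Mathlib

open scoped ComplexOrder

/-- Matrix logarithm of a Hermitian matrix, via the spectral decomposition. -/
noncomputable def mlog {n : ℕ} (A : Matrix (Fin n) (Fin n) ℂ) :
    Matrix (Fin n) (Fin n) ℂ :=
  if hA : A.IsHermitian then
    (hA.eigenvectorUnitary : Matrix (Fin n) (Fin n) ℂ) *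
      Matrix.diagonal (fun i => (Real.log (hA.eigenvalues i) : ℂ)) *
      star (hA.eigenvectorUnitary : Matrix (Fin n) (Fin n) ℂ)
  else 0

/-- The von Neumann entropy `S(ρ) = −Tr(ρ log ρ)`. -/
noncomputable def vnEntropy {n : ℕ} (ρ : Matrix (Fin n) (Fin n) ℂ) : ℝ :=
  -(Matrix.trace (ρ * mlog ρ)).re

/-- The quantum relative entropy `S(ρ‖τ) = Tr(ρ log ρ) − Tr(ρ log τ)`. -/
noncomputable def relEntropy {n : ℕ} (ρ τ : Matrix (Fin n) (Fin n) ℂ) : ℝ :=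
  (Matrix.trace (ρ * mlog ρ) - Matrix.trace (ρ * mlog τ)).re

/-!
The logarithm of a Gibbs state `exp H / Z`, `Z = Tr exp H`, is `H - log Z`, so for `τ ∈ G`
the operator `log τ` lies in `V + ℝ·1`, on which `ρ` and `σ` have the same expectations. Hence
`Tr(ρ log τ) = Tr(σ log τ)` for all `τ ∈ G`, which gives the Pythagorean identity
`S(ρ‖τ) = S(ρ‖σ) + S(σ‖τ)`; the claim follows from `S(σ‖τ) ≥ 0` (Klein's inequality).
In eigenbases `σ = Σ p_k |u_k⟩⟨u_k|`, `τ = Σ q_l |w_l⟩⟨w_l|`, the overlaps `|⟨w_l, u_k⟩|²` form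
a doubly stochastic matrix, and Klein's inequality reduces to `p log q ≤ p log p + q - p`.
-/

open Matrix

variable {ι : Type*} [Fintype ι] [DecidableEq ι]

lemma Real.mul_log_le_mul_log_add_sub {p q : ℝ} (hp : 0 ≤ p) (hq : 0 < q) :
    p * Real.log q ≤ p * Real.log p + q - p := by
  rcases hp.eq_or_lt with rfl | hp
  · simpa using hq.le
  have h := Real.log_le_sub_one_of_pos (div_pos hq hp)
  rw [Real.log_div hq.ne' hp.ne', le_sub_iff_add_le, le_div_iff₀ hp] at h
  linarith

lemma sum_sum_mul_mul_log_le_of_mem_doublyStochastic {w : Matrix ι ι ℝ}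
    (hw : w ∈ doublyStochastic ℝ ι) {p q : ι → ℝ} (hp : ∀ k, 0 ≤ p k) (hq : ∀ l, 0 < q l)
    (hpq : ∑ k, p k = ∑ l, q l) :
    ∑ l, ∑ k, w l k * (p k * Real.log (q l)) ≤ ∑ k, p k * Real.log (p k) := by
  have hcol (x : ι → ℝ) : ∑ l, ∑ k, w l k * x k = ∑ k, x k := by
    rw [Finset.sum_comm]
    simp only [← Finset.sum_mul, sum_col_of_mem_doublyStochastic hw, one_mul]
  have hrow (y : ι → ℝ) : ∑ l, ∑ k, w l k * y l = ∑ l, y l := by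
    simp only [← Finset.sum_mul, sum_row_of_mem_doublyStochastic hw, one_mul]
  calc ∑ l, ∑ k, w l k * (p k * Real.log (q l))
      ≤ ∑ l, ∑ k, w l k * (p k * Real.log (p k) + q l - p k) := by
        gcongr with l _ k _
        · exact nonneg_of_mem_doublyStochastic hw
        · exact Real.mul_log_le_mul_log_add_sub (hp k) (hq l)
    _ = ∑ k, p k * Real.log (p k) + ∑ l, q l - ∑ k, p k := by
        simp only [mul_sub, mul_add, Finset.sum_sub_distrib, Finset.sum_add_distrib, hcol, hrow]
    _ = ∑ k, p k * Real.log (p k) := by rw [hpq]; ring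

lemma normSq_mem_doublyStochastic_of_mem_unitary {N : Matrix ι ι ℂ}
    (hN : N ∈ unitary (Matrix ι ι ℂ)) :
    Matrix.of (fun i j => Complex.normSq (N i j)) ∈ doublyStochastic ℝ ι := by
  rw [mem_doublyStochastic_iff_sum]
  refine ⟨fun i j => Complex.normSq_nonneg _, fun i => ?_, fun j => ?_⟩
  · have h : (N * star N) i i = (1 : Matrix ι ι ℂ) i i := by
      rw [Unitary.mul_star_self_of_mem hN]
    simp only [mul_apply, star_apply, Complex.star_def, Complex.mul_conj, one_apply_eq] at h
    exact_mod_cast h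
  · have h : (star N * N) j j = (1 : Matrix ι ι ℂ) j j := by
      rw [Unitary.star_mul_self_of_mem hN]
    simp only [mul_apply, star_apply, Complex.star_def, mul_comm, Complex.mul_conj,
      one_apply_eq] at h
    exact_mod_cast h

lemma re_trace_diagonal_mul_star_mul_diagonal_mul (N : Matrix ι ι ℂ) (d e : ι → ℝ) :
    (trace (diagonal (RCLike.ofReal ∘ d) * star N * diagonal (RCLike.ofReal ∘ e) * N)).re =
      ∑ l, ∑ k, Complex.normSq (N l k) * (d k * e l) := by
  rw [Finset.sum_comm]
  simp only [trace, diag, mul_apply (M := _ * diagonal _), mul_diagonal, diagonal_mul, star_apply,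
    Complex.re_sum]
  refine Finset.sum_congr rfl fun k _ => Finset.sum_congr rfl fun l _ => ?_
  simp [Complex.normSq_apply]
  ring

lemma re_trace_cfc_mul_cfc {A B : Matrix ι ι ℂ} (hA : A.IsHermitian) (hB : B.IsHermitian)
    (f g : ℝ → ℝ) :
    (trace (cfc f A * cfc g B)).re = ∑ l, ∑ k,
      Complex.normSq ((star (hB.eigenvectorUnitary : Matrix ι ι ℂ) * hA.eigenvectorUnitary) l k) *
        (f (hA.eigenvalues k) * g (hB.eigenvalues l)) := by
  refine Eq.trans ?_ (re_trace_diagonal_mul_star_mul_diagonal_mul _ (f ∘ hA.eigenvalues)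
    (g ∘ hB.eigenvalues))
  rw [hA.cfc_eq, hB.cfc_eq, IsHermitian.cfc, IsHermitian.cfc, Unitary.conjStarAlgAut_apply,
    Unitary.conjStarAlgAut_apply]
  simp only [Matrix.mul_assoc]
  rw [trace_mul_comm (hA.eigenvectorUnitary : Matrix ι ι ℂ)]
  simp only [Matrix.mul_assoc, star_mul, star_star]

lemma mlog_eq_cfc {n : ℕ} {A : Matrix (Fin n) (Fin n) ℂ} (hA : A.IsHermitian) :
    mlog A = cfc Real.log A := by
  rw [mlog, dif_pos hA, hA.cfc_eq]
  rfl

theorem relEntropy_nonneg {n : ℕ} {σ τ : Matrix (Fin n) (Fin n) ℂ} (hσ : σ.PosSemidef)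
    (hτ : τ.PosDef) (htr : σ.trace = τ.trace) : 0 ≤ relEntropy σ τ := by
  have hσid : cfc id σ = σ := cfc_id ℝ σ hσ.1.isSelfAdjoint
  have hcross := re_trace_cfc_mul_cfc hσ.1 hτ.1 id Real.log
  have hself := re_trace_cfc_mul_cfc hσ.1 hσ.1 id Real.log
  rw [hσid, ← mlog_eq_cfc hτ.1] at hcross
  rw [hσid, ← mlog_eq_cfc hσ.1, Unitary.star_mul_self_of_mem hσ.1.eigenvectorUnitary.2] at hself
  simp only [one_apply, apply_ite Complex.normSq, Complex.normSq_one, Complex.normSq_zero,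
    ite_mul, one_mul, zero_mul, Finset.sum_ite_eq, Finset.mem_univ, if_true, id] at hself
  have htr' : ∑ k, hσ.1.eigenvalues k = ∑ l, hτ.1.eigenvalues l := by
    rw [hσ.1.trace_eq_sum_eigenvalues, hτ.1.trace_eq_sum_eigenvalues] at htr
    exact_mod_cast htr
  rw [relEntropy, Complex.sub_re, sub_nonneg, hcross, hself]
  exact sum_sum_mul_mul_log_le_of_mem_doublyStochastic
    (normSq_mem_doublyStochastic_of_mem_unitary
      (mul_mem (Unitary.star_mem hτ.1.eigenvectorUnitary.2) hσ.1.eigenvectorUnitary.2))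
    hσ.eigenvalues_nonneg hτ.eigenvalues_pos htr'

theorem relEntropy_eq_relEntropy_add_relEntropy {n : ℕ} {ρ σ τ : Matrix (Fin n) (Fin n) ℂ}
    (hσ : trace (ρ * mlog σ) = trace (σ * mlog σ))
    (hτ : trace (ρ * mlog τ) = trace (σ * mlog τ)) :
    relEntropy ρ τ = relEntropy ρ σ + relEntropy σ τ := by
  simp only [relEntropy, Complex.sub_re, hσ, hτ]
  ring

noncomputable def gibbsState (H : Matrix ι ι ℂ) : Matrix ι ι ℂ :=
  (trace (NormedSpace.exp H))⁻¹ • NormedSpace.exp H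

section GibbsState

open scoped Matrix.Norms.L2Operator MatrixOrder

variable {H : Matrix ι ι ℂ}

theorem Matrix.IsHermitian.posDef_exp (hH : H.IsHermitian) : (NormedSpace.exp H).PosDef :=
  isStrictlyPositive_iff_posDef.mp ⟨hH.isSelfAdjoint.exp_nonneg, isUnit_exp H⟩

variable [Nonempty ι]

theorem re_trace_exp_pos (hH : H.IsHermitian) : 0 < (trace (NormedSpace.exp H)).re :=
  (Complex.pos_iff.mp hH.posDef_exp.trace_pos).1

theorem trace_gibbsState (hH : H.IsHermitian) : trace (gibbsState H) = 1 := by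
  rw [gibbsState, trace_smul, smul_eq_mul, inv_mul_cancel₀ hH.posDef_exp.trace_pos.ne']

theorem gibbsState_eq_smul (hH : H.IsHermitian) :
    gibbsState H = ((trace (NormedSpace.exp H)).re)⁻¹ • NormedSpace.exp H := by
  have htr : trace (NormedSpace.exp H) = ((trace (NormedSpace.exp H)).re : ℂ) :=
    Complex.eq_re_of_ofReal_le (r := 0) (by exact_mod_cast hH.posDef_exp.trace_pos.le)
  rw [gibbsState, htr, ← Complex.ofReal_inv, Complex.coe_smul, Complex.ofReal_re]

theorem posDef_gibbsState (hH : H.IsHermitian) : (gibbsState H).PosDef := by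
  rw [gibbsState_eq_smul hH]
  exact hH.posDef_exp.smul (inv_pos.2 (re_trace_exp_pos hH))

end GibbsState

open scoped Matrix.Norms.L2Operator MatrixOrder in
theorem mlog_gibbsState {n : ℕ} [NeZero n] {H : Matrix (Fin n) (Fin n) ℂ} (hH : H.IsHermitian) :
    mlog (gibbsState H) = H - algebraMap ℝ _ (Real.log (trace (NormedSpace.exp H)).re) := by
  rw [mlog_eq_cfc (posDef_gibbsState hH).1, gibbsState_eq_smul hH]
  change CFC.log _ = _
  rw [CFC.log_smul' _ (inv_pos.2 (re_trace_exp_pos hH)) hH.posDef_exp.isStrictlyPositive,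
    CFC.log_exp H hH.isSelfAdjoint, Real.log_inv, map_neg, neg_add_eq_sub]

theorem trace_mul_mlog_gibbsState {n : ℕ} [NeZero n] {ρ H : Matrix (Fin n) (Fin n) ℂ}
    (hH : H.IsHermitian) (hρ : ρ.trace = 1) :
    trace (ρ * mlog (gibbsState H)) =
      trace (ρ * H) - Real.log (trace (NormedSpace.exp H)).re := by
  rw [mlog_gibbsState hH, Matrix.mul_sub, trace_sub, Algebra.algebraMap_eq_smul_one,
    mul_smul_comm, Matrix.mul_one, trace_smul, hρ, Complex.real_smul, mul_one]

theorem gibbs_min_relEntropy_general {n : ℕ} (ρ σ : Matrix (Fin n) (Fin n) ℂ)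
    (hρ1 : ρ.trace = 1)
    (V : Submodule ℝ (Matrix (Fin n) (Fin n) ℂ))
    (hV : ∀ H ∈ V, H.IsHermitian)
    (G : Set (Matrix (Fin n) (Fin n) ℂ))
    (hG : G = {τ | ∃ H ∈ V,
      τ = (Matrix.trace (NormedSpace.exp H))⁻¹ • NormedSpace.exp H})
    (hσG : σ ∈ G)
    (hmatch : ∀ H ∈ V, (ρ * H).trace = (σ * H).trace) :
    (∀ τ ∈ G, relEntropy ρ σ ≤ relEntropy ρ τ) ∧
      relEntropy ρ σ = vnEntropy σ - vnEntropy ρ := by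
  have : NeZero n := ⟨by rintro rfl; simp at hρ1⟩
  subst hG
  obtain ⟨Hσ, hHσ, rfl⟩ : ∃ H ∈ V, σ = gibbsState H := hσG
  have hσ1 : trace (gibbsState Hσ) = 1 := trace_gibbsState (hV Hσ hHσ)
  have hlog : ∀ H ∈ V,
      trace (ρ * mlog (gibbsState H)) = trace (gibbsState Hσ * mlog (gibbsState H)) :=
    fun H hH => by
      rw [trace_mul_mlog_gibbsState (hV H hH) hρ1, trace_mul_mlog_gibbsState (hV H hH) hσ1,
        hmatch H hH]
  refine ⟨fun τ hτ => ?_, ?_⟩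
  · obtain ⟨H, hH, rfl⟩ : ∃ H ∈ V, τ = gibbsState H := hτ
    rw [relEntropy_eq_relEntropy_add_relEntropy (hlog Hσ hHσ) (hlog H hH),
      le_add_iff_nonneg_right]
    exact relEntropy_nonneg (posDef_gibbsState (hV Hσ hHσ)).posSemidef
      (posDef_gibbsState (hV H hH)) (by rw [hσ1, trace_gibbsState (hV H hH)])
  · rw [relEntropy, vnEntropy, vnEntropy, hlog Hσ hHσ, Complex.sub_re]
    ring

/-- If `σ` is a Gibbs state `exp(H)/Tr(exp H)` over a linear subspace `V` of
Hermitian operators and matches the `V`-moments of `ρ`, then `σ` minimizes the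
relative entropy `S(ρ‖·)` over the Gibbs family `G`, with minimum value
`S(σ) − S(ρ)`. -/
theorem gibbs_min_relEntropy {n : ℕ} (ρ σ : Matrix (Fin n) (Fin n) ℂ)
    (hρ : ρ.PosDef) (hρ1 : ρ.trace = 1)
    (V : Submodule ℝ (Matrix (Fin n) (Fin n) ℂ))
    (hV : ∀ H ∈ V, H.IsHermitian)
    (G : Set (Matrix (Fin n) (Fin n) ℂ))
    (hG : G = {τ | ∃ H ∈ V,
      τ = (Matrix.trace (NormedSpace.exp H))⁻¹ • NormedSpace.exp H})
    (hσG : σ ∈ G)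
    (hmatch : ∀ H ∈ V, (ρ * H).trace = (σ * H).trace) :
    (∀ τ ∈ G, relEntropy ρ σ ≤ relEntropy ρ τ) ∧
      relEntropy ρ σ = vnEntropy σ - vnEntropy ρ :=
  gibbs_min_relEntropy_general ρ σ hρ1 V hV G hG hσG hmatch
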